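/- arXiv:math/0605779 — 12 statements merged into one kernel-verified Lean document; each statement's English description precedes it below -/
import Mathlib

section
/- For any sets A and B, if there is a bijection between {0,1,2} × A and {0,1,2} × B, then there is a bijection between A and B. -/
open Cardinal

lemma three_lt_aleph0 : (3 : Cardinal) < ℵ₀ := by
  exact_mod_cast nat_lt_aleph0 3

lemma three_mul_cancel {a b : Cardinal} (h : 3 * a = 3 * b) : a = b := by
  rcases lt_or_ge a ℵ₀ with ha | ha
  · rcases lt_or_ge b ℵ₀ with hb | hb
    · obtain ⟨n, rfl⟩ := lt_aleph0.1 ha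
      obtain ⟨m, rfl⟩ := lt_aleph0.1 hb
      have h' : 3 * n = 3 * m := by exact_mod_cast h
      exact_mod_cast (by omega : n = m)
    · exfalso
      have h3a : 3 * a < ℵ₀ := mul_lt_aleph0 three_lt_aleph0 ha
      have hle : ℵ₀ ≤ 3 * b :=
        le_trans hb (le_mul_left (by positivity))
      rw [← h] at hle
      exact absurd hle (not_le.2 h3a)
  · rcases lt_or_ge b ℵ₀ with hb | hb
    · exfalso
      have h3b : 3 * b < ℵ₀ := mul_lt_aleph0 three_lt_aleph0 hb
      have hle : ℵ₀ ≤ 3 * a := le_trans ha (le_mul_left (by positivity))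
      rw [h] at hle
      exact absurd hle (not_le.2 h3b)
    · have e1 : 3 * a = a := mul_eq_right ha (le_trans three_lt_aleph0.le ha) (by norm_num)
      have e2 : 3 * b = b := mul_eq_right hb (le_trans three_lt_aleph0.le hb) (by norm_num)
      rw [e1, e2] at h; exact h

universe u v

lemma div_by_three_aux {A : Type u} {B : Type v}
    (he : Nonempty (Fin 3 × A ≃ Fin 3 × B)) : Nonempty (A ≃ B) := by
  have h0 := Cardinal.lift_mk_eq'.2 he
  have h : 3 * Cardinal.lift.{v} #A = 3 * Cardinal.lift.{u} #B := by
    simpa [Cardinal.mk_prod, Cardinal.lift_mul, mul_comm] using h0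
  exact Cardinal.lift_mk_eq'.1 (three_mul_cancel h)

theorem div_by_three (A B : Type*) :
    Nonempty (Fin 3 × A ≃ Fin 3 × B) → Nonempty (A ≃ B) :=
  div_by_three_aux
end

section
/- For any sets A and B, if there is a bijection between {0,1} × A and {0,1} × B, then there is a bijection between A and B. -/
theorem cancel_two_aux {x y : Cardinal.{w}} (hx : Cardinal.aleph0 ≤ x)
    (hy : Cardinal.aleph0 ≤ y) (h : 2 * x = 2 * y) : x = y := by
  have h2 : (2 : Cardinal.{w}) ≤ Cardinal.aleph0 := by
    exact_mod_cast (Cardinal.nat_lt_aleph0 2).le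
  calc x = 2 * x := (Cardinal.mul_eq_right hx (h2.trans hx) (by norm_num)).symm
    _ = 2 * y := h
    _ = y := Cardinal.mul_eq_right hy (h2.trans hy) (by norm_num)

theorem div_by_two (A B : Type*) :
    Nonempty (Fin 2 × A ≃ Fin 2 × B) → Nonempty (A ≃ B) := by
  rintro ⟨e⟩
  cases finite_or_infinite A with
  | inl hA =>
    have hB : Finite B := by
      have h2 : Finite (Fin 2 × B) := Finite.of_equiv _ e
      exact Finite.of_surjective (Prod.snd : Fin 2 × B → B) Prod.snd_surjective
    have hc : Nat.card (Fin 2 × A) = Nat.card (Fin 2 × B) := Nat.card_congr e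
    simp [Nat.card_prod] at hc
    exact Finite.card_eq.mp hc
  | inr hA =>
    haveI := hA
    have hB : Infinite B := by
      rw [← not_finite_iff_infinite]
      intro hfB
      have h2 : Finite (Fin 2 × A) := Finite.of_equiv _ e.symm
      have h3 : Finite A := Finite.of_surjective (Prod.snd : Fin 2 × A → A) Prod.snd_surjective
      exact hA.not_finite h3
    have h := Cardinal.lift_mk_eq'.mpr ⟨e⟩
    rw [Cardinal.mk_prod, Cardinal.mk_prod] at h
    simp only [Cardinal.lift_mul, Cardinal.lift_lift, Cardinal.mk_fin,
      Cardinal.lift_natCast, Nat.cast_ofNat, Cardinal.lift_ofNat] at h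
    refine Cardinal.lift_mk_eq'.mp (cancel_two_aux ?_ ?_ h)
    · exact Cardinal.aleph0_le_lift.mpr (Cardinal.aleph0_le_mk A)
    · exact Cardinal.aleph0_le_lift.mpr (Cardinal.aleph0_le_mk B)
end

section
/- For every positive natural number n and any sets A and B, if there is a bijection between {0,…,n−1} × A and {0,…,n−1} × B, then there is a bijection between A and B. -/
lemma nat_mul_cancel_card (n : ℕ) (hn : 1 ≤ n) :
    ∀ b c : Cardinal, (n : Cardinal) * b = n * c → b ≤ c := by
  intro b c h
  have hn0 : (n : Cardinal) ≠ 0 := by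
    exact_mod_cast Nat.one_le_iff_ne_zero.mp hn
  have hb : b ≤ (n : Cardinal) * b := Cardinal.le_mul_left hn0
  rcases le_or_gt Cardinal.aleph0 c with hc | hc
  · have : (n : Cardinal) * c = c :=
      Cardinal.mul_eq_right hc ((Cardinal.nat_lt_aleph0 n).le.trans hc) hn0
    calc b ≤ (n : Cardinal) * b := hb
      _ = (n : Cardinal) * c := h
      _ = c := this
  · have hnc : (n : Cardinal) * c < Cardinal.aleph0 :=
      Cardinal.mul_lt_aleph0 (Cardinal.nat_lt_aleph0 n) hc
    have hbfin : b < Cardinal.aleph0 := lt_of_le_of_lt (hb.trans_eq h) hnc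
    obtain ⟨b', rfl⟩ := Cardinal.lt_aleph0.mp hbfin
    obtain ⟨c', rfl⟩ := Cardinal.lt_aleph0.mp hc
    have : n * b' = n * c' := by exact_mod_cast h
    have := Nat.eq_of_mul_eq_mul_left (by omega) this
    exact_mod_cast this.le

theorem div_by_n (n : ℕ) (hn : 1 ≤ n) (A B : Type*) :
    Nonempty (Fin n × A ≃ Fin n × B) → Nonempty (A ≃ B) := by
  rintro ⟨e⟩
  rw [← Cardinal.lift_mk_eq']
  have h : Cardinal.lift.{_} (Cardinal.mk (Fin n × A)) =
      Cardinal.lift.{_} (Cardinal.mk (Fin n × B)) :=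
    Cardinal.lift_mk_eq'.mpr ⟨e⟩
  simp only [Cardinal.mk_prod, Cardinal.lift_mul, Cardinal.lift_lift,
    Cardinal.mk_fin, Cardinal.lift_natCast] at h
  exact le_antisymm (nat_mul_cancel_card n hn _ _ h)
    (nat_mul_cancel_card n hn _ _ h.symm)
end

section
/- For any sets A and B, if there is an injection from {0,1,2} × A into {0,1,2} × B, then there is an injection from A into B. -/
open Cardinal

lemma three_mul_le_cancel {a b : Cardinal} (h : 3 * a ≤ 3 * b) : a ≤ b := by
  rcases lt_or_ge b ℵ₀ with hb | hb
  · have ha : a < ℵ₀ := by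
      by_contra ha
      push_neg at ha
      have : 3 * b < 3 * a := by
        calc 3 * b < ℵ₀ := by
              exact Cardinal.mul_lt_aleph0 (Cardinal.nat_lt_aleph0 3) hb
          _ ≤ a := ha
          _ ≤ 3 * a := by
              conv_lhs => rw [← one_mul a]
              exact mul_le_mul_left (by norm_num) a
      exact absurd h this.not_ge
    lift a to ℕ using ha
    lift b to ℕ using hb
    rw [← Nat.cast_ofNat (n := 3), ← Nat.cast_mul, ← Nat.cast_mul,
      Nat.cast_le] at h
    exact_mod_cast Nat.le_of_mul_le_mul_left h (by norm_num)
  · have hab : a ≤ 3 * b := le_trans (by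
      conv_lhs => rw [← one_mul a]
      exact mul_le_mul_left (by norm_num) a) h
    have : (3 : Cardinal) * b = b := by
      rw [Cardinal.mul_eq_right hb (le_trans (by exact_mod_cast (Cardinal.nat_lt_aleph0 3).le) hb) (by norm_num)]
    rwa [this] at hab

theorem div_ineq_by_three (A B : Type*) :
    Nonempty (Fin 3 × A ↪ Fin 3 × B) → Nonempty (A ↪ B) := by
  intro ⟨f⟩
  rw [← Cardinal.lift_mk_le']
  have h := Cardinal.lift_mk_le'.mpr ⟨f⟩
  simp only [Cardinal.mk_prod, Cardinal.lift_mul, Cardinal.mk_fin,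
    Cardinal.lift_natCast, Cardinal.lift_lift, Cardinal.lift_id] at h
  exact three_mul_le_cancel (by exact_mod_cast h)
end

section
/- For every positive natural number n and any sets A and B, if there is an injection from {0,…,n−1} × A into {0,…,n−1} × B, then there is an injection from A into B. -/
/-! Under choice this is cancellation of a nonzero natural factor among cardinals: finite
cardinals cancel as natural numbers, while an infinite cardinal `a` satisfies `n * a = a`. -/

theorem Function.Embedding.nonempty_of_prod_left {ι A B : Type*} [Finite ι] [Nonempty ι]
    (h : Nonempty (ι × A ↪ ι × B)) : Nonempty (A ↪ B) := by
  rw [← Cardinal.lift_mk_le'] at h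
  simp only [Cardinal.mk_prod, Cardinal.lift_mul, Cardinal.lift_lift, ← Nat.cast_card,
    Cardinal.lift_natCast, Cardinal.natCast_mul_le_natCast_mul Nat.card_pos.ne'] at h
  exact Cardinal.lift_mk_le.mp h

theorem div_ineq_by_n (n : ℕ) (hn : 1 ≤ n) (A B : Type*) :
    Nonempty (Fin n × A ↪ Fin n × B) → Nonempty (A ↪ B) :=
  have : NeZero n := ⟨by omega⟩
  Function.Embedding.nonempty_of_prod_left
end

section
/- Tarski's Lemma: for any sets A and B, if there is an injection from B into A and an injection from {0,1,2} × A into {0,1,2} × B, then there is a bijection between A and B. -/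
theorem tarski_lemma (A B : Type*) :
    Nonempty (B ↪ A) → Nonempty (Fin 3 × A ↪ Fin 3 × B) → Nonempty (A ≃ B) := by
  intro h1 h2
  rw [← Cardinal.lift_mk_eq']
  have hb : Cardinal.lift.{_} (Cardinal.mk B) ≤ Cardinal.lift.{_} (Cardinal.mk A) :=
    Cardinal.lift_mk_le'.mpr h1
  have ha : Cardinal.lift.{_} (Cardinal.mk (Fin 3 × A)) ≤
      Cardinal.lift.{_} (Cardinal.mk (Fin 3 × B)) := Cardinal.lift_mk_le'.mpr h2
  simp only [Cardinal.mk_prod, Cardinal.mk_fin, Cardinal.lift_mul, Cardinal.lift_natCast,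
    Cardinal.lift_lift] at ha
  set x := Cardinal.lift (Cardinal.mk A) with hx
  set y := Cardinal.lift (Cardinal.mk B) with hy
  have hx3 : x ≤ (3 : ℕ) * x := by
    nth_rewrite 1 [← one_mul x]
    exact mul_le_mul' (by exact_mod_cast Nat.one_le_iff_ne_zero.mpr (by norm_num)) le_rfl
  refine le_antisymm ?_ hb
  rcases lt_or_ge y Cardinal.aleph0 with hfin | hinf
  · have hxfin : x < Cardinal.aleph0 := by
      refine lt_of_le_of_lt (hx3.trans ha) ?_
      exact Cardinal.mul_lt_aleph0 (Cardinal.nat_lt_aleph0 3) hfin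
    obtain ⟨n, hn⟩ := Cardinal.lt_aleph0.mp hfin
    obtain ⟨m, hm⟩ := Cardinal.lt_aleph0.mp hxfin
    rw [hn, hm] at ha ⊢
    have h3 : (3 * m : ℕ) ≤ 3 * n := by exact_mod_cast ha
    exact_mod_cast Nat.le_of_mul_le_mul_left h3 (by norm_num)
  · have h3y : ((3 : ℕ) : Cardinal) * y = y :=
      Cardinal.mul_eq_right hinf ((Cardinal.nat_lt_aleph0 3).le.trans hinf)
        (by exact_mod_cast (by norm_num : (3:ℕ) ≠ 0))
    exact (hx3.trans ha).trans h3y.le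
end

section
/- Subtraction Theorem: for any sets A and B and any finite set C, if there is a bijection between the disjoint union A + C and the disjoint union B + C, then there is a bijection between A and B. -/
private def optTrick (X : Type*) (n : ℕ) : X ⊕ Fin (n + 1) ≃ Option (X ⊕ Fin n) :=
  (Equiv.sumCongr (Equiv.refl X) ((finSuccEquiv n).trans (Equiv.optionEquivSumPUnit.{0} (Fin n)))).trans
    ((Equiv.sumAssoc X (Fin n) PUnit.{1}).symm.trans (Equiv.optionEquivSumPUnit.{0} (X ⊕ Fin n)).symm)

private theorem fin_cancel : ∀ (n : ℕ) (A B : Type*), (A ⊕ Fin n ≃ B ⊕ Fin n) → Nonempty (A ≃ B)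
  | 0, A, B, e => ⟨(Equiv.sumEmpty A (Fin 0)).symm.trans (e.trans (Equiv.sumEmpty B (Fin 0)))⟩
  | n + 1, A, B, e =>
    fin_cancel n A B <| Equiv.removeNone <|
      (optTrick A n).symm.trans (e.trans (optTrick B n))

theorem subtraction_theorem (A B C : Type*) [Finite C] :
    Nonempty (A ⊕ C ≃ B ⊕ C) → Nonempty (A ≃ B) := by
  rintro ⟨e⟩
  obtain ⟨n, ⟨f⟩⟩ := Finite.exists_equiv_fin C
  exact fin_cancel n A B <|
    (Equiv.sumCongr (Equiv.refl A) f).symm.trans (e.trans (Equiv.sumCongr (Equiv.refl B) f))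
end

section
/- If C is a Dedekind-finite set, then for any sets A and B, a bijection between the disjoint union A + C and the disjoint union B + C yields a bijection between A and B. -/
/-!
Classically a Dedekind-finite type is finite: an infinite `C` satisfies `#C + 1 = #C`, so
`Option C ≃ C`, and composing this with `some` is injective but misses the image of `none`.
For finite `C` the cardinal `#C` is a natural number and may be cancelled from `#A + #C = #B + #C`.
-/

universe u v w

open Function Cardinal

theorem Infinite.exists_injective_not_surjective (C : Type*) [Infinite C] :
    ∃ f : C → C, Injective f ∧ ¬ Surjective f := by
  obtain ⟨e⟩ : Nonempty (Option C ≃ C) :=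
    Cardinal.eq.mp (by rw [mk_option, add_one_eq (aleph0_le_mk C)])
  refine ⟨e ∘ some, e.injective.comp (Option.some_injective C), fun h ↦ ?_⟩
  obtain ⟨c, hc⟩ := h (e none)
  exact Option.some_ne_none c (e.injective hc)

theorem finite_iff_forall_injective_imp_surjective (C : Type*) :
    Finite C ↔ ∀ f : C → C, Injective f → Surjective f := by
  refine ⟨fun _ _ ↦ Finite.injective_iff_surjective.mp, fun h ↦ ?_⟩
  by_contra hfin
  have : Infinite C := not_finite_iff_infinite.mp hfin
  obtain ⟨f, hinj, hsurj⟩ := Infinite.exists_injective_not_surjective C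
  exact hsurj (h f hinj)

theorem Equiv.nonempty_of_sum_equiv_sum_of_finite {A : Type u} {B : Type v} {C : Type w}
    [Finite C] (e : A ⊕ C ≃ B ⊕ C) : Nonempty (A ≃ B) := by
  have hsum := lift_mk_eq'.mpr ⟨e⟩
  simp only [mk_sum, lift_add, lift_lift] at hsum
  have hC : lift.{max u v w} #C < ℵ₀ := lift_lt_aleph0.mpr (lt_aleph0_of_finite C)
  exact lift_mk_eq.{u, v, w}.mp (Cardinal.eq_of_add_eq_add_right hsum hC)

theorem dedekind_finite_cancel (A B C : Type*)
    (hC : ¬ ∃ f : C → C, Function.Injective f ∧ ¬ Function.Surjective f) :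
    Nonempty (A ⊕ C ≃ B ⊕ C) → Nonempty (A ≃ B) := by
  rintro ⟨e⟩
  push Not at hC
  have : Finite C := (finite_iff_forall_injective_imp_surjective C).mpr hC
  exact e.nonempty_of_sum_equiv_sum_of_finite
end

section
/- For any sets A and B: A swallows B if and only if there is an injection from B × ω into A, where ω is the set of natural numbers. -/
theorem swallow_iff_omega_embedding (A B : Type*) :
    Nonempty (A ⊕ B ≃ A) ↔ Nonempty (B × ℕ ↪ A) := by
  constructor
  · rintro ⟨e⟩
    set f : A → A := fun a => e (Sum.inl a) with hf
    set g : B → A := fun b => e (Sum.inr b) with hg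
    have hfg : ∀ a b, f a ≠ g b := by
      intro a b hab
      simpa using e.injective hab
    have hfi : Function.Injective f := fun a a' h => by
      simpa using e.injective h
    have hgi : Function.Injective g := fun b b' h => by
      simpa using e.injective h
    have key : ∀ n m (b b' : B), f^[n] (g b) = f^[m] (g b') → n = m ∧ b = b' := by
      intro n
      induction n with
      | zero =>
        intro m b b' h
        cases m with
        | zero => exact ⟨rfl, hgi h⟩
        | succ k =>
          rw [Function.iterate_succ_apply'] at h
          exact absurd h.symm (hfg _ _)
      | succ k ih =>
        intro m b b' h
        cases m with
        | zero =>
          rw [Function.iterate_succ_apply'] at h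
          exact absurd h (hfg _ _)
        | succ l =>
          rw [Function.iterate_succ_apply', Function.iterate_succ_apply'] at h
          obtain ⟨h1, h2⟩ := ih l b b' (hfi h)
          exact ⟨by rw [h1], h2⟩
    refine ⟨⟨fun p => f^[p.2] (g p.1), ?_⟩⟩
    rintro ⟨b, n⟩ ⟨b', m⟩ h
    obtain ⟨h1, h2⟩ := key n m b b' h
    simp [h1, h2]
  · rintro ⟨i⟩
    classical
    have e1 : A ≃ (Set.range i) ⊕ ((Set.range i)ᶜ : Set A) :=
      (Equiv.Set.sumCompl _).symm
    have e2 : (Set.range i : Set A) ≃ B × ℕ := (Equiv.ofInjective i i.injective).symm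
    have e3 : (B × ℕ) ⊕ B ≃ B × ℕ :=
      { toFun := Sum.elim (fun p => (p.1, p.2 + 1)) (fun b => (b, 0))
        invFun := fun p => Nat.rec (Sum.inr p.1) (fun n _ => Sum.inl (p.1, n)) p.2
        left_inv := by rintro (⟨b, n⟩ | b) <;> rfl
        right_inv := by rintro ⟨b, _ | n⟩ <;> rfl }
    exact ⟨calc
      A ⊕ B ≃ ((B × ℕ) ⊕ ((Set.range i)ᶜ : Set A)) ⊕ B :=
        Equiv.sumCongr (e1.trans (Equiv.sumCongr e2 (Equiv.refl _))) (Equiv.refl _)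
      _ ≃ ((B × ℕ) ⊕ B) ⊕ ((Set.range i)ᶜ : Set A) :=
        (Equiv.sumAssoc _ _ _).trans <|
          (Equiv.sumCongr (Equiv.refl _) (Equiv.sumComm _ _)).trans
            (Equiv.sumAssoc _ _ _).symm
      _ ≃ (B × ℕ) ⊕ ((Set.range i)ᶜ : Set A) := Equiv.sumCongr e3 (Equiv.refl _)
      _ ≃ (Set.range i) ⊕ ((Set.range i)ᶜ : Set A) := Equiv.sumCongr e2.symm (Equiv.refl _)
      _ ≃ A := Equiv.Set.sumCompl _⟩
end

section
/- Lemma 3: for any sets A and B, if {0,1,2} × B swallows A, then B swallows A. -/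
theorem swallow_of_three_mul_swallow (A B : Type*) :
    Nonempty ((Fin 3 × B) ⊕ A ≃ Fin 3 × B) → Nonempty (B ⊕ A ≃ B) := by
  intro ⟨e⟩
  have h := Cardinal.lift_mk_eq'.mpr ⟨e⟩
  apply Cardinal.lift_mk_eq'.mp
  simp only [Cardinal.mk_sum, Cardinal.mk_prod, Cardinal.mk_fintype, Fintype.card_fin,
    Cardinal.lift_natCast, Cardinal.lift_add, Cardinal.lift_mul, Cardinal.lift_lift,
    Cardinal.lift_id] at h ⊢
  set a := Cardinal.lift (Cardinal.mk A) with ha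
  set b := Cardinal.lift (Cardinal.mk B) with hb
  rw [Cardinal.add_eq_left_iff] at h
  rw [Cardinal.add_eq_left_iff]
  rcases h with h | h
  · left
    have hbinf : Cardinal.aleph0 ≤ b := by
      by_contra hbi
      push_neg at hbi
      have : ((3:ℕ) : Cardinal) * b < Cardinal.aleph0 :=
        Cardinal.mul_lt_aleph0 (Cardinal.nat_lt_aleph0 3) hbi
      exact absurd ((le_max_left _ _).trans h) (not_le.mpr this)
    have h3 : ((3:ℕ) : Cardinal) * b = b :=
      Cardinal.mul_eq_right hbinf ((Cardinal.nat_lt_aleph0 3).le.trans hbinf) (by norm_num)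
    rwa [h3] at h
  · right; exact h
end

section
/- For any sets A and B, if there is an injection from {0,1} × A into {0,1} × B, then there is an injection from A into B. -/
open Cardinal

/-- Finite cardinals cancel as natural numbers do; an infinite `b` absorbs the factor `n`. -/
theorem Cardinal.le_of_natCast_mul_le_natCast_mul {n : ℕ} (hn : n ≠ 0) {a b : Cardinal}
    (h : n * a ≤ n * b) : a ≤ b := by
  have hn' : (n : Cardinal) ≠ 0 := Nat.cast_ne_zero.2 hn
  rcases lt_or_ge b ℵ₀ with hb | hb
  · obtain ⟨m, rfl⟩ := lt_aleph0.1 hb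
    have ha : a < ℵ₀ :=
      (le_mul_left hn').trans_lt (h.trans_lt (by exact_mod_cast natCast_lt_aleph0))
    obtain ⟨k, rfl⟩ := lt_aleph0.1 ha
    exact_mod_cast Nat.le_of_mul_le_mul_left (by exact_mod_cast h) (Nat.pos_of_ne_zero hn)
  · calc a ≤ n * a := le_mul_left hn'
      _ ≤ n * b := h
      _ = b := mul_eq_right hb (natCast_le_aleph0.trans hb) hn'

theorem div_ineq_by_two (A B : Type*) :
    Nonempty (Fin 2 × A ↪ Fin 2 × B) → Nonempty (A ↪ B) := by
  rintro ⟨f⟩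
  rw [← lift_mk_le']
  apply le_of_natCast_mul_le_natCast_mul two_ne_zero
  simpa [mk_prod] using lift_mk_le'.2 ⟨f⟩
end

section
/- Tarski's Lemma for general n: for every positive natural number n and any sets A and B, if there is an injection from B into A and an injection from {0,…,n−1} × A into {0,…,n−1} × B, then there is a bijection between A and B. -/
open Cardinal in
lemma tarski_cancel_aux {n : ℕ} (hn : 1 ≤ n) {a b : Cardinal}
    (h : (n : Cardinal) * a ≤ (n : Cardinal) * b) : a ≤ b := by
  have hn0 : (n : Cardinal) ≠ 0 := by exact_mod_cast Nat.one_le_iff_ne_zero.mp hn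
  have hle : a ≤ (n : Cardinal) * a := by
    conv_lhs => rw [← one_mul a]
    exact mul_le_mul_left (by exact_mod_cast hn) a
  rcases lt_or_ge b ℵ₀ with hb | hb
  · obtain ⟨m, rfl⟩ := lt_aleph0.mp hb
    have ha : a < ℵ₀ := lt_of_le_of_lt (hle.trans h) (by
      rw [← Nat.cast_mul]; exact nat_lt_aleph0 _)
    obtain ⟨k, rfl⟩ := lt_aleph0.mp ha
    have hnk : n * k ≤ n * m := by exact_mod_cast h
    exact_mod_cast Nat.le_of_mul_le_mul_left hnk hn
  · have heq : (n : Cardinal) * b = b :=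
      mul_eq_right hb (le_trans (nat_lt_aleph0 n).le hb) hn0
    calc a ≤ (n : Cardinal) * a := hle
      _ ≤ (n : Cardinal) * b := h
      _ = b := heq

lemma tarski_main_aux.{u, v} (n : ℕ) (hn : 1 ≤ n) (A : Type u) (B : Type v) :
    Nonempty (B ↪ A) → Nonempty (Fin n × A ↪ Fin n × B) → Nonempty (A ≃ B) := by
  intro h1 h2
  have hba : Cardinal.lift.{u} (Cardinal.mk B) ≤ Cardinal.lift.{v} (Cardinal.mk A) :=
    Cardinal.lift_mk_le'.mpr h1
  have hab : (n : Cardinal.{max u v}) * Cardinal.lift.{v} (Cardinal.mk A) ≤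
      (n : Cardinal.{max u v}) * Cardinal.lift.{u} (Cardinal.mk B) := by
    have := Cardinal.lift_mk_le'.mpr h2
    simpa [Cardinal.mk_prod, Cardinal.mk_fin, Cardinal.lift_mul] using this
  exact Cardinal.lift_mk_eq'.{u, v}.mp (le_antisymm (tarski_cancel_aux hn hab) hba)

theorem tarski_lemma_general (n : ℕ) (hn : 1 ≤ n) (A B : Type*) :
    Nonempty (B ↪ A) → Nonempty (Fin n × A ↪ Fin n × B) → Nonempty (A ≃ B) :=
  tarski_main_aux n hn A B
end
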